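/- Let R = {R_1, ..., R_m} ⊂ ℝ^n with dim span(R) = p and {R_1, ..., R_p} linearly independent. Suppose the coordinate graph G of R has connected components with vertex sets V_1, ..., V_c. Define P_j to be the set of those R_k ∈ R whose basis expansion R_k = Σ a_i R_i has support contained in the indices of V_j (assigning vectors with empty support arbitrarily, say to P_1). Then every R_k belongs to exactly one P_j, and dim span(P_j) = |V_j| for each j; consequently Σ_j dim span(P_j) = p = dim span(R), so {P_1, ..., P_c} is an independent decomposition. -/

import Mathlib

/-!
Every vector `R k` is a combination of the basis vectors `R i` (`i < p`) with coefficients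
`a k`, which are unique by linear independence. Any two indices in the support of `a k` are
adjacent in the coordinate graph, so the support lies in a single component `V j`; this
makes the assignment `k ↦ j` well defined. The part `P j` contains the basis vectors indexed
by `V j` and lies in their span, so `dim span P j = |V j|`, and these cardinalities add up
to `p` because the components partition the vertex set.
-/

open Function Module Submodule

section Coordinates

variable {R M ι : Type*} [Ring R] [AddCommGroup M] [Module R M] {e : ι → M}

theorem LinearIndepOn.finrank_span_image [StrongRankCondition R] {s : Set ι}
    (hs : LinearIndepOn R e s) : finrank R (span R (e '' s)) = s.ncard := by
  rw [Set.ncard_def, ← toENat_rank_span_set hs, finrank, Cardinal.toNat_toENat]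

variable [Fintype ι]

theorem LinearIndependent.coeffs_eq_of_sum_eq (he : LinearIndependent R e) {b b' : ι → R}
    (h : ∑ i, b i • e i = ∑ i, b' i • e i) : b = b' :=
  funext (Fintype.linearIndependent_iffₛ.1 he b b' h)

theorem LinearIndependent.coeffs_eq_single [DecidableEq ι] (he : LinearIndependent R e)
    {b : ι → R} {i : ι} (h : e i = ∑ i', b i' • e i') : b = Pi.single i 1 :=
  he.coeffs_eq_of_sum_eq <| by simp [← h, Pi.single_apply, ite_smul]

theorem sum_smul_mem_span_image {b : ι → R} {s : Set ι} (hb : ∀ i, b i ≠ 0 → i ∈ s) :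
    ∑ i, b i • e i ∈ span R (e '' s) := by
  refine sum_mem fun i _ => ?_
  by_cases hi : b i = 0
  · simp [hi]
  · exact smul_mem _ _ (subset_span ⟨i, hb i hi, rfl⟩)

end Coordinates

section Partition

variable {ι κ α : Type*} {V : κ → Set ι}

theorem sum_ncard_eq_card_of_iUnion_eq_univ [Fintype κ] [Finite ι]
    (hdisj : Pairwise (Disjoint on V)) (hcover : ⋃ j, V j = Set.univ) :
    ∑ j, (V j).ncard = Nat.card ι := by
  rw [← finsum_eq_sum_of_fintype, ← Set.ncard_iUnion_of_finite (fun _ => Set.toFinite _) hdisj,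
    hcover, Set.ncard_univ]

variable [Zero α]

def IsAssignedTo (V : κ → Set ι) (j₀ : κ) (b : ι → α) (j : κ) : Prop :=
  ((∀ i, b i = 0) → j = j₀) ∧ ∀ i, b i ≠ 0 → i ∈ V j

theorem existsUnique_isAssignedTo (hdisj : Pairwise (Disjoint on V))
    (hcover : ⋃ j, V j = Set.univ) (j₀ : κ) {b : ι → α}
    (hb : ∀ j, ∀ i ∈ V j, b i ≠ 0 → ∀ i', b i' ≠ 0 → i' ∈ V j) :
    ∃! j, IsAssignedTo V j₀ b j := by
  by_cases hzero : ∀ i, b i = 0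
  · exact ⟨j₀, ⟨fun _ => rfl, fun i hi => absurd (hzero i) hi⟩, fun j hj => hj.1 hzero⟩
  obtain ⟨i₀, hi₀⟩ := not_forall.1 hzero
  obtain ⟨j, hj⟩ := Set.mem_iUnion.1 (hcover ▸ Set.mem_univ i₀)
  refine ⟨j, ⟨fun h => absurd (h i₀) hi₀, hb j i₀ hj hi₀⟩, fun j' hj' => ?_⟩
  by_contra hne
  exact Set.disjoint_left.1 (hdisj hne) (hj'.2 i₀ hi₀) hj

theorem isAssignedTo_single [DecidableEq ι] [One α] [NeZero (1 : α)] (j₀ : κ) {i : ι}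
    {j : κ} (hi : i ∈ V j) : IsAssignedTo V j₀ (Pi.single i (1 : α)) j := by
  refine ⟨fun h => absurd (h i) (by simp), fun i' hi' => ?_⟩
  obtain rfl : i' = i := by simpa [Pi.single_apply] using hi'
  exact hi

end Partition

theorem stmt_19_general {n m p c : ℕ} (hpm : p ≤ m) (hc : 0 < c)
    (R : Fin m → (Fin n → ℝ))
    (hdim : Module.finrank ℝ (Submodule.span ℝ (Set.range R)) = p)
    (hLI : LinearIndependent ℝ (fun i : Fin p => R (Fin.castLE hpm i)))
    (a : Fin m → Fin p → ℝ)
    (ha : ∀ k, R k = ∑ i, a k i • R (Fin.castLE hpm i))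
    (G : SimpleGraph (Fin p))
    (hG : ∀ i j, G.Adj i j ↔
      i ≠ j ∧ ∃ k : Fin m, a k i ≠ 0 ∧ a k j ≠ 0)
    -- `V j` is the vertex set of the `j`-th connected component of `G`
    (V : Fin c → Set (Fin p))
    (hVdisj : ∀ j j', j ≠ j' → V j ∩ V j' = ∅)
    (hVcover : (⋃ j, V j) = Set.univ)
    (hVcomp : ∀ j, ∀ i ∈ V j, ∀ i', (i' ∈ V j ↔ G.Reachable i i'))
    -- `P j` consists of the vectors whose support lies in `V j`
    -- (vectors with empty support are assigned to `P ⟨0, hc⟩`)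
    (P : Fin c → Set (Fin n → ℝ))
    (hP : ∀ j, P j = {x | ∃ k : Fin m, R k = x ∧
      (((∀ i, a k i = 0) → j = ⟨0, hc⟩) ∧ (∀ i, a k i ≠ 0 → i ∈ V j))}) :
    (∀ k : Fin m, ∃! j, R k ∈ P j) ∧
    (∀ j, Module.finrank ℝ (Submodule.span ℝ (P j)) = (V j).ncard) ∧
    (∑ j, Module.finrank ℝ (Submodule.span ℝ (P j)) = p) ∧
    p = Module.finrank ℝ (Submodule.span ℝ (Set.range R)) := by
  have hdisj : Pairwise (Disjoint on V) := fun j j' h =>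
    Set.disjoint_iff_inter_eq_empty.2 (hVdisj j j' h)
  have hcoeff : ∀ k k', R k = R k' → a k = a k' := fun k k' h =>
    hLI.coeffs_eq_of_sum_eq (by rw [← ha k, ← ha k', h])
  have hmem : ∀ k j, R k ∈ P j ↔ IsAssignedTo V ⟨0, hc⟩ (a k) j := by
    refine fun k j => ⟨fun hk => ?_, fun hk => hP j ▸ ⟨k, rfl, hk⟩⟩
    obtain ⟨k', hk', hassigned⟩ := hP j ▸ hk
    rwa [hcoeff k' k hk'] at hassigned
  have hsupport : ∀ k j, ∀ i ∈ V j, a k i ≠ 0 → ∀ i', a k i' ≠ 0 → i' ∈ V j := by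
    intro k j i hi hki i' hki'
    rcases eq_or_ne i i' with rfl | hii'
    · exact hi
    · exact (hVcomp j i hi i').2 ((hG i i').2 ⟨hii', k, hki, hki'⟩).reachable
  have hspan : ∀ j, span ℝ (P j) = span ℝ ((fun i => R (Fin.castLE hpm i)) '' V j) := by
    classical
    refine fun j => le_antisymm (span_le.2 ?_) (span_mono ?_)
    · rw [hP]
      rintro _ ⟨k, rfl, -, hsub⟩
      exact ha k ▸ sum_smul_mem_span_image hsub
    · rintro _ ⟨i, hi, rfl⟩
      refine (hmem _ j).2 ?_
      rw [hLI.coeffs_eq_single (ha _)]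
      exact isAssignedTo_single _ hi
  have hdims : ∀ j, finrank ℝ (span ℝ (P j)) = (V j).ncard := fun j => by
    rw [hspan, (hLI.linearIndepOn _).finrank_span_image]
  refine ⟨fun k => ?_, hdims, ?_, hdim.symm⟩
  · simp only [hmem]
    exact existsUnique_isAssignedTo hdisj hVcover _ (hsupport k)
  · simp only [hdims, sum_ncard_eq_card_of_iUnion_eq_univ hdisj hVcover, Nat.card_eq_fintype_card,
      Fintype.card_fin]

/-- Partitioning `R` according to the connected components `V₁, ..., V_c` of
its coordinate graph (each vector goes to the part of the component containing
the support of its basis expansion; vectors with empty support go to `P₁`)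
yields an independent decomposition, with `dim span Pⱼ = |Vⱼ|` for each `j` and
`∑ⱼ dim span Pⱼ = p = dim span R`. -/
theorem stmt_19 {n m p c : ℕ} (hpm : p ≤ m) (hc : 0 < c)
    (R : Fin m → (Fin n → ℝ)) (hR0 : ∀ k, R k ≠ 0)
    (hdim : Module.finrank ℝ (Submodule.span ℝ (Set.range R)) = p)
    (hLI : LinearIndependent ℝ (fun i : Fin p => R (Fin.castLE hpm i)))
    (a : Fin m → Fin p → ℝ)
    (ha : ∀ k, R k = ∑ i, a k i • R (Fin.castLE hpm i))
    (G : SimpleGraph (Fin p))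
    (hG : ∀ i j, G.Adj i j ↔
      i ≠ j ∧ ∃ k : Fin m, a k i ≠ 0 ∧ a k j ≠ 0)
    -- `V j` is the vertex set of the `j`-th connected component of `G`
    (V : Fin c → Set (Fin p))
    (hVne : ∀ j, (V j).Nonempty)
    (hVdisj : ∀ j j', j ≠ j' → V j ∩ V j' = ∅)
    (hVcover : (⋃ j, V j) = Set.univ)
    (hVcomp : ∀ j, ∀ i ∈ V j, ∀ i', (i' ∈ V j ↔ G.Reachable i i'))
    -- `P j` consists of the vectors whose support lies in `V j`
    -- (vectors with empty support are assigned to `P ⟨0, hc⟩`)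
    (P : Fin c → Set (Fin n → ℝ))
    (hP : ∀ j, P j = {x | ∃ k : Fin m, R k = x ∧
      (((∀ i, a k i = 0) → j = ⟨0, hc⟩) ∧ (∀ i, a k i ≠ 0 → i ∈ V j))}) :
    (∀ k : Fin m, ∃! j, R k ∈ P j) ∧
    (∀ j, Module.finrank ℝ (Submodule.span ℝ (P j)) = (V j).ncard) ∧
    (∑ j, Module.finrank ℝ (Submodule.span ℝ (P j)) = p) ∧
    p = Module.finrank ℝ (Submodule.span ℝ (Set.range R)) :=
  stmt_19_general hpm hc R hdim hLI a ha G hG V hVdisj hVcover hVcomp P hP
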